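/- For all natural numbers n and k with 0 ≤ k ≤ n, one has −(n+1) · binom(n,k) · ∫_0^1 p^k (1−p)^{n−k} ln p dp = Σ_{ℓ=0}^{n−k} 1/(n+1−ℓ). -/

import Mathlib

open MeasureTheory

/-- The Bloch coherent state of spin `n/2` with parameters `Ω = (p, φ)`:
components `(v_n(Ω))_k = √(binom n k) · p^(k/2) · (1-p)^((n-k)/2) · exp(-i k φ)`. -/
noncomputable def bloch (n : ℕ) (Ω : ℝ × ℝ) : EuclideanSpace ℂ (Fin (n + 1)) :=
  WithLp.toLp 2 fun k : Fin (n + 1) => (↑(Real.sqrt (n.choose k) * Real.sqrt Ω.1 ^ (k : ℕ) *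
      Real.sqrt (1 - Ω.1) ^ (n - (k : ℕ))) : ℂ) *
    Complex.exp (-((k : ℕ) : ℂ) * Complex.I * (Ω.2 : ℂ))

/-- A sphere point: `(p, φ) ∈ [0,1] × [0, 2π)`. -/
def IsSpherePt (Ω : ℝ × ℝ) : Prop :=
  Ω.1 ∈ Set.Icc (0 : ℝ) 1 ∧ Ω.2 ∈ Set.Ico (0 : ℝ) (2 * Real.pi)

/-- The overlap `⟨v_n(Ω), ψ⟩` (inner product conjugate-linear in the first argument). -/
noncomputable def ov (n : ℕ) (Ω : ℝ × ℝ) (ψ : EuclideanSpace ℂ (Fin (n + 1))) : ℂ :=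
  inner ℂ (bloch n Ω) ψ

/-- Normalized integral over the sphere: `∫ f(Ω) dΩ/4π = ∫_0^1 ∫_0^{2π} f(p,φ) dφ/(2π) dp`. -/
noncomputable def sphereInt (f : ℝ × ℝ → ℝ) : ℝ :=
  ∫ p in (0 : ℝ)..1, (∫ φ in (0 : ℝ)..(2 * Real.pi), f (p, φ)) / (2 * Real.pi)

/-- The Wehrl entropy of a state `ψ ∈ ℂ^(n+1)`. -/
noncomputable def wehrl (n : ℕ) (ψ : EuclideanSpace ℂ (Fin (n + 1))) : ℝ :=
  -((n : ℝ) + 1) * sphereInt (fun Ω => ‖ov n Ω ψ‖ ^ 2 * Real.log (‖ov n Ω ψ‖ ^ 2))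

/-- `ψ` is represented by the `n` sphere points `ω 1, …, ω n` with constant `c`:
`|⟨v_n(Ω), ψ⟩|² = c · ∏ k, |⟨v_1(Ω), v_1(ω k)⟩|²` for every sphere point `Ω`. -/
def Represents (n : ℕ) (ψ : EuclideanSpace ℂ (Fin (n + 1))) (ω : Fin n → ℝ × ℝ) (c : ℝ) :
    Prop :=
  (∀ k, IsSpherePt (ω k)) ∧
    ∀ Ω, IsSpherePt Ω → ‖ov n Ω ψ‖ ^ 2 = c * ∏ k : Fin n, ‖ov 1 Ω (bloch 1 (ω k))‖ ^ 2

/-- Squared chordal distance between two sphere points (sphere of radius 1/2):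
`d(ω, ω') = 1 - |⟨v_1(ω), v_1(ω')⟩|²`. -/
noncomputable def chord (ω ω' : ℝ × ℝ) : ℝ := 1 - ‖ov 1 ω (bloch 1 ω')‖ ^ 2

/-- `ψ` is a coherent state, i.e. `ψ = e^{iθ} v_n(Ω)` for some `θ` and some sphere point `Ω`. -/
def IsCoherent (n : ℕ) (ψ : EuclideanSpace ℂ (Fin (n + 1))) : Prop :=
  ∃ (θ : ℝ) (Ω : ℝ × ℝ), IsSpherePt Ω ∧ ψ = Complex.exp ((θ : ℂ) * Complex.I) • bloch n Ω

/-!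
Write `L(k, m) = ∫₀¹ x^k (1-x)^m log x` and `B(k, m) = ∫₀¹ x^k (1-x)^m = k! m! / (k+m+1)!`.
Differentiating `x^(k+1) (1-x)^m log x`, which vanishes at both ends of `[0, 1]`, gives
`(k+1) L(k, m) = m L(k+1, m-1) - B(k, m)`. Lowering `m` by one raises `k` by one and contributes
the single term `1/(k+1)`, so induction on `m` yields
`L(k, m) = -B(k, m) · ∑_{ℓ=0}^{m} 1/(k+m+1-ℓ)`, and `(n+1) binom(n, k) B(k, n-k) = 1`.
-/

open Real intervalIntegral
open scoped Nat

lemma intervalIntegrable_pow_mul_one_sub_pow_mul_log (k m : ℕ) (a b : ℝ) :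
    IntervalIntegrable (fun x : ℝ => x ^ k * (1 - x) ^ m * log x) volume a b :=
  intervalIntegrable_log'.continuousOn_mul (by fun_prop)

lemma integral_pow_mul_one_sub_pow (k m : ℕ) :
    ∫ x in (0:ℝ)..1, x ^ k * (1 - x) ^ m = (k ! * m ! : ℝ) / (k + m + 1)! := by
  have h := Complex.betaIntegral_eq_Gamma_mul_div (k + 1) (m + 1) (by simp; positivity)
    (by simp; positivity)
  rw [show (k + 1 + (m + 1) : ℂ) = (k + m + 1 : ℕ) + 1 by push_cast; ring] at h
  simp only [Complex.betaIntegral, add_sub_cancel_right, Complex.cpow_natCast,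
    Complex.Gamma_nat_eq_factorial] at h
  apply Complex.ofReal_injective
  push_cast [← integral_ofReal]
  exact h

lemma hasDerivAt_pow_succ_mul_one_sub_pow_mul_log (k m : ℕ) {x : ℝ} (hx : x ≠ 0) :
    HasDerivAt (fun x : ℝ => x ^ (k + 1) * (1 - x) ^ m * log x)
      ((k + 1) * (x ^ k * (1 - x) ^ m * log x) - m * (x ^ (k + 1) * (1 - x) ^ (m - 1) * log x)
        + x ^ k * (1 - x) ^ m) x := by
  have hpow : HasDerivAt (fun x : ℝ => x ^ (k + 1)) ((k + 1) * x ^ k) x := by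
    simpa using hasDerivAt_pow (k + 1) x
  have hsub : HasDerivAt (fun x : ℝ => (1 - x) ^ m) (m * (1 - x) ^ (m - 1) * -1) x := by
    simpa using ((hasDerivAt_id x).const_sub 1).fun_pow m
  refine ((hpow.fun_mul hsub).fun_mul (hasDerivAt_log hx)).congr_deriv ?_
  field_simp
  ring

lemma integral_pow_mul_one_sub_pow_mul_log_recurrence (k m : ℕ) :
    (k + 1) * ∫ x in (0:ℝ)..1, x ^ k * (1 - x) ^ m * log x =
      m * (∫ x in (0:ℝ)..1, x ^ (k + 1) * (1 - x) ^ (m - 1) * log x) -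
        ∫ x in (0:ℝ)..1, x ^ k * (1 - x) ^ m := by
  have hL := intervalIntegrable_pow_mul_one_sub_pow_mul_log
  have hB : IntervalIntegrable (fun x : ℝ => x ^ k * (1 - x) ^ m) volume 0 1 := by
    apply Continuous.intervalIntegrable; fun_prop
  -- continuity at `0` comes from that of `x log x`
  have hcont : ContinuousOn (fun x : ℝ => x ^ (k + 1) * (1 - x) ^ m * log x) (Set.Icc 0 1) := by
    have : Continuous fun x : ℝ => x ^ k * (1 - x) ^ m * (x * log x) := by
      fun_prop (disch := exact continuous_mul_log)
    refine (this.congr fun x => ?_).continuousOn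
    ring
  have hftc := integral_eq_sub_of_hasDerivAt_of_le zero_le_one hcont
    (fun x hx => hasDerivAt_pow_succ_mul_one_sub_pow_mul_log k m hx.1.ne')
    ((((hL k m 0 1).const_mul _).sub ((hL (k + 1) (m - 1) 0 1).const_mul _)).add hB)
  rw [integral_add (((hL k m 0 1).const_mul _).sub ((hL (k + 1) (m - 1) 0 1).const_mul _)) hB,
    integral_sub ((hL k m 0 1).const_mul _) ((hL (k + 1) (m - 1) 0 1).const_mul _),
    intervalIntegral.integral_const_mul, intervalIntegral.integral_const_mul] at hftc
  simp only [log_one, log_zero, mul_zero, sub_zero] at hftc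
  linarith

open Finset in
theorem integral_pow_mul_one_sub_pow_mul_log (k m : ℕ) :
    ∫ x in (0:ℝ)..1, x ^ k * (1 - x) ^ m * log x =
      -((k ! * m ! : ℝ) / (k + m + 1)!) * ∑ ℓ ∈ range (m + 1), 1 / ((k + m + 1 : ℝ) - ℓ) := by
  induction m generalizing k with
  | zero =>
    have h := integral_pow_mul_one_sub_pow_mul_log_recurrence k 0
    rw [integral_pow_mul_one_sub_pow] at h
    apply mul_left_cancel₀ (show (k + 1 : ℝ) ≠ 0 by positivity)
    rw [h, Nat.add_zero, Nat.factorial_succ, sum_range_one]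
    push_cast
    field_simp
    ring
  | succ m ih =>
    have h := integral_pow_mul_one_sub_pow_mul_log_recurrence k (m + 1)
    rw [Nat.add_sub_cancel, ih, integral_pow_mul_one_sub_pow] at h
    have hsum : ∑ ℓ ∈ range (m + 1 + 1), 1 / ((k + ↑(m + 1) + 1 : ℝ) - ℓ) =
        ∑ ℓ ∈ range (m + 1), 1 / ((↑(k + 1) + m + 1 : ℝ) - ℓ) + 1 / (k + 1) := by
      rw [sum_range_succ]
      push_cast
      ring_nf
    rw [hsum]
    apply mul_left_cancel₀ (show (k + 1 : ℝ) ≠ 0 by positivity)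
    rw [h, show k + 1 + m + 1 = k + (m + 1) + 1 by ring, Nat.factorial_succ k,
      Nat.factorial_succ m]
    push_cast
    field_simp
    ring

/-- The basic entropy integral:
`-(n+1)·binom(n,k)·∫_0^1 p^k (1-p)^(n-k) ln p dp = ∑_{ℓ=0}^{n-k} 1/(n+1-ℓ)`. -/
theorem entropy_integral_eval (n k : ℕ) (hk : k ≤ n) :
    -((n : ℝ) + 1) * (n.choose k : ℝ) *
        ∫ p in (0 : ℝ)..1, p ^ k * (1 - p) ^ (n - k) * Real.log p =
      ∑ ℓ ∈ Finset.range (n - k + 1), 1 / ((n : ℝ) + 1 - (ℓ : ℝ)) := by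
  obtain ⟨m, rfl⟩ := Nat.exists_eq_add_of_le hk
  have hchoose : ((k + m).choose k * k ! * m ! : ℝ) = (k + m)! := by
    exact_mod_cast by simpa using Nat.choose_mul_factorial_mul_factorial hk
  have hchoose_ne : ((k + m).choose k : ℝ) ≠ 0 := by exact_mod_cast (Nat.choose_pos hk).ne'
  rw [Nat.add_sub_cancel_left, integral_pow_mul_one_sub_pow_mul_log, Nat.factorial_succ,
    Nat.cast_mul, ← hchoose]
  push_cast
  field_simp
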